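/- Let xy be an edge (reciprocal best match) in a BMG explained by (T,σ), and let v_x, v_y be the children of lca_T(x,y) with x ⪯ v_x and y ⪯ v_y. Then σ(x) ∉ σ(L(T(v_x))) ∩ σ(L(T(v_y))) and σ(y) ∉ σ(L(T(v_x))) ∩ σ(L(T(v_y))), i.e., neither σ(x) nor σ(y) belongs to the color-intersection S∩(x,y). -/

import Mathlib

/-- A finite rooted tree, given by a parent function: every vertex reaches the
root along the parent chain. -/
structure PTree (V : Type*) where
  parent : V → Option V
  root : V
  root_parent : parent root = none
  connected : ∀ v : V, Relation.ReflTransGen (fun a b => parent a = some b) v root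

namespace PTree

variable {V C : Type*}

/-- `T.anc a b` : `b` is an ancestor of `a` (i.e. `a ⪯ b` in the ancestor order). -/
def anc (T : PTree V) (a b : V) : Prop :=
  Relation.ReflTransGen (fun x y => T.parent x = some y) a b

/-- `v` is a child of `u`. -/
def child (T : PTree V) (v u : V) : Prop := T.parent v = some u

/-- A leaf is a vertex without children. -/
def isLeaf (T : PTree V) (v : V) : Prop := ∀ w, ¬ T.child w v

/-- `u` is the last common ancestor of `x` and `y`. -/
def isLCA (T : PTree V) (u x y : V) : Prop :=
  T.anc x u ∧ T.anc y u ∧ ∀ w, T.anc x w → T.anc y w → T.anc u w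

/-- `σ(L(T(v)))` : the set of colors of the leaves of the subtree rooted at `v`. -/
def leafColors (T : PTree V) (σ : V → C) (v : V) : Set C :=
  {c | ∃ x, T.isLeaf x ∧ T.anc x v ∧ σ x = c}

/-- `y` is a best match of `x` in `(T,σ)`. -/
def bestMatch (T : PTree V) (σ : V → C) (x y : V) : Prop :=
  T.isLeaf x ∧ T.isLeaf y ∧ σ x ≠ σ y ∧
    ∀ y', T.isLeaf y' → σ y' = σ y →
      ∀ u u', T.isLCA u x y → T.isLCA u' x y' → T.anc u u'

/-- `x` and `y` are reciprocal best matches, i.e. `xy` is an edge of the BMG `G(T,σ)`. -/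
def edge (T : PTree V) (σ : V → C) (x y : V) : Prop :=
  T.bestMatch σ x y ∧ T.bestMatch σ y x

/-- Every inner vertex (other than the planted root) has exactly two children. -/
def Binary (T : PTree V) : Prop :=
  ∀ u : V, u ≠ T.root → ¬ T.isLeaf u →
    ∃ v₁ v₂, v₁ ≠ v₂ ∧ T.child v₁ u ∧ T.child v₂ u ∧
      ∀ w, T.child w u → w = v₁ ∨ w = v₂

/-- Adjacency in the color-set intersection graph `𝔠_T(u)`. -/
def csiAdj (T : PTree V) (σ : V → C) (u a b : V) : Prop :=
  a ≠ b ∧ T.child a u ∧ T.child b u ∧ (T.leafColors σ a ∩ T.leafColors σ b).Nonempty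

/-- `a` and `b` lie in the same connected component of `𝔠_T(u)`. -/
def sameComp (T : PTree V) (σ : V → C) (u a b : V) : Prop :=
  Relation.ReflTransGen (T.csiAdj σ u) a b

/-- `S` is a connected component of `𝔠_T(u)` with more than one element. -/
def IsBigComp (T : PTree V) (σ : V → C) (u : V) (S : Set V) : Prop :=
  (∃ a, T.child a u ∧ S = {b | T.sameComp σ u a b}) ∧ ∃ a ∈ S, ∃ b ∈ S, a ≠ b

end PTree

/-- `(T, σT)` explains the colored digraph `(E, σ)` on the gene set `L`, with
`ι` identifying the genes with the leaves of `T`. -/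
def Explains {V L C : Type*} (T : PTree V) (ι : L → V) (σT : V → C) (σ : L → C)
    (E : L → L → Prop) : Prop :=
  Function.Injective ι ∧ (∀ l, T.isLeaf (ι l)) ∧ (∀ v, T.isLeaf v → ∃ l, ι l = v) ∧
    (∀ l, σT (ι l) = σ l) ∧ ∀ x y, E x y ↔ T.bestMatch σT (ι x) (ι y)

/-- The parent function after contracting the edge `uv` (with `v` a child of `u`). -/
def contractedParent {V : Type*} [DecidableEq V] (T : PTree V) (u v w : V) : Option V :=
  (T.parent w).map (fun p => if p = v then u else p)

/-- One step towards the contracted parent when contracting all edges whose lower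
endpoints form the set `A`. -/
def multiContractStep {V : Type*} (T : PTree V) (A : Set V) (a b : V) : Prop :=
  T.parent a = some b ∧ b ∈ A

/-- Event types for inner vertices of an event-labeled gene tree. -/
inductive Event : Type
  | speciation
  | duplication

namespace PTree

variable {V C : Type*}

lemma anc_total (T : PTree V) : ∀ {a b c : V}, T.anc a b → T.anc a c →
    T.anc b c ∨ T.anc c b := by
  intro a b c hab
  induction hab using Relation.ReflTransGen.head_induction_on with
  | refl => intro hac; left; exact hac
  | head h h' ih =>
    intro hac
    rcases hac.cases_head with rfl | ⟨d, hd, hdc⟩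
    · right; exact Relation.ReflTransGen.head h h'
    · have : d = _ := Option.some.inj (hd.symm.trans h)
      subst this
      exact ih hdc

lemma no_cycle (T : PTree V) : ∀ a a' : V, T.parent a = some a' → ¬ T.anc a' a := by
  intro a
  have hconn := T.connected a
  induction hconn using Relation.ReflTransGen.head_induction_on with
  | refl => intro a' h; rw [T.root_parent] at h; exact fun _ => nomatch h
  | @head a c h h' ih =>
    intro a' hpa hanc
    have hac : a' = c := Option.some.inj (hpa.symm.trans h)
    subst hac
    rcases hanc.cases_head with rfl | ⟨d, hd, hda⟩
    · exact ih _ h Relation.ReflTransGen.refl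
    · exact ih d hd (hda.tail h)

lemma anc_antisymm (T : PTree V) {a b : V} (hab : T.anc a b) (hba : T.anc b a) :
    a = b := by
  rcases hab.cases_head with rfl | ⟨c, hc, hcb⟩
  · rfl
  · exact absurd (hcb.trans hba) (T.no_cycle a c hc)

end PTree

lemma exists_min_of_total {α : Type*} (r : α → α → Prop)
    (htrans : ∀ {a b c}, r a b → r b c → r a c) :
    ∀ (s : Finset α), s.Nonempty → (∀ a ∈ s, ∀ b ∈ s, r a b ∨ r b a) →
      ∃ m ∈ s, ∀ b ∈ s, r m b := by
  intro s
  induction s using Finset.cons_induction with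
  | empty => intro h; exact absurd h (by simp)
  | cons a s ha ih =>
    intro _ htot
    rcases s.eq_empty_or_nonempty with rfl | hs
    · refine ⟨a, Finset.mem_cons_self a _, fun b hb => ?_⟩
      have hba : b = a := by simpa using hb
      subst hba
      exact (htot b hb b hb).elim id id
    · obtain ⟨m, hm, hmin⟩ := ih hs
        (fun p hp q hq => htot p (Finset.mem_cons_of_mem hp) q (Finset.mem_cons_of_mem hq))
      rcases htot a (Finset.mem_cons_self a _) m (Finset.mem_cons_of_mem hm) with ham | hma
      · refine ⟨a, Finset.mem_cons_self a _, fun b hb => ?_⟩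
        rcases Finset.mem_cons.mp hb with rfl | hb
        · exact (htot b hb b hb).elim id id
        · exact htrans ham (hmin b hb)
      · refine ⟨m, Finset.mem_cons_of_mem hm, fun b hb => ?_⟩
        rcases Finset.mem_cons.mp hb with rfl | hb
        · exact hma
        · exact hmin b hb

/-- Given two leaves below `v`, there is a last common ancestor of them below `v`. -/
lemma exists_lca_below {V : Type*} [Fintype V] (T : PTree V) {p q v : V}
    (hp : T.anc p v) (hq : T.anc q v) :
    ∃ m, T.isLCA m p q ∧ T.anc m v := by
  classical
  set s : Finset V := Finset.univ.filter (fun w => T.anc p w ∧ T.anc q w) with hs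
  have hmem : ∀ w, w ∈ s ↔ T.anc p w ∧ T.anc q w := by
    intro w; simp [hs]
  have hvs : v ∈ s := (hmem v).mpr ⟨hp, hq⟩
  obtain ⟨m, hm, hmin⟩ := exists_min_of_total T.anc (fun h1 h2 => h1.trans h2) s ⟨v, hvs⟩
    (fun a haa b hbb => T.anc_total ((hmem a).mp haa).1 ((hmem b).mp hbb).1)
  obtain ⟨hpm, hqm⟩ := (hmem m).mp hm
  exact ⟨m, ⟨hpm, hqm, fun w h1 h2 => hmin w ((hmem w).mpr ⟨h1, h2⟩)⟩, hmin v hvs⟩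

/-- For an edge `xy` of the BMG `G(T,σ)`, neither `σ(x)` nor `σ(y)`
belongs to the color-intersection `S∩(x,y) = σ(L(T(v_x))) ∩ σ(L(T(v_y)))`. -/
theorem stmt_8 {V C : Type*} [Fintype V] (T : PTree V) (σ : V → C)
    (x y u vx vy : V)
    (hedge : T.edge σ x y) (hu : T.isLCA u x y)
    (hvx : T.child vx u) (hvy : T.child vy u)
    (hxvx : T.anc x vx) (hyvy : T.anc y vy) :
    σ x ∉ T.leafColors σ vx ∩ T.leafColors σ vy ∧
      σ y ∉ T.leafColors σ vx ∩ T.leafColors σ vy := by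
  have hvxu : T.anc vx u := Relation.ReflTransGen.single hvx
  have hvyu : T.anc vy u := Relation.ReflTransGen.single hvy
  constructor
  · rintro ⟨-, hcy⟩
    obtain ⟨x', hx'leaf, hx'anc, hx'σ⟩ := hcy
    obtain ⟨m, hlca, hmvy⟩ := exists_lca_below T hyvy hx'anc
    have huyx : T.isLCA u y x := ⟨hu.2.1, hu.1, fun w h1 h2 => hu.2.2 w h2 h1⟩
    have hum : T.anc u m := hedge.2.2.2.2 x' hx'leaf hx'σ u m huyx hlca
    have huvy : T.anc u vy := hum.trans hmvy
    exact T.no_cycle vy u hvy huvy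
  · rintro ⟨hcx, -⟩
    obtain ⟨y', hy'leaf, hy'anc, hy'σ⟩ := hcx
    obtain ⟨m, hlca, hmvx⟩ := exists_lca_below T hxvx hy'anc
    have hum : T.anc u m := hedge.1.2.2.2 y' hy'leaf hy'σ u m hu hlca
    have huvx : T.anc u vx := hum.trans hmvx
    exact T.no_cycle vx u hvx huvx
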